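/- (Identifiability) Fix X̄_S, X̄_L ∈ ℝ^{m×n} and let Ω̄ be the subspace of matrices supported on supp(X̄_S) and T̄ = {X₁ + X₂ : range(X₁) ⊆ range(X̄_L), range(X₂ᵀ) ⊆ range(X̄_Lᵀ)}. If inf_{ρ>0} α(ρ)β(ρ) < 1, then Ω̄ ∩ T̄ = {0}. -/

import Mathlib

open scoped BigOperators
open Matrix
noncomputable section

namespace SLR

/-- Trace inner product `⟨A,B⟩ = tr(AᵀB)`. -/
def inner' {m n : ℕ} (A B : Matrix (Fin m) (Fin n) ℝ) : ℝ := ∑ i, ∑ j, A i j * B i j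

/-- Entrywise 1-norm. -/
def l1 {m n : ℕ} (M : Matrix (Fin m) (Fin n) ℝ) : ℝ := ∑ i, ∑ j, |M i j|

/-- Entrywise ∞-norm (maximum absolute value of an entry). -/
def linf {m n : ℕ} (M : Matrix (Fin m) (Fin n) ℝ) : ℝ := ⨆ i, ⨆ j, |M i j|

/-- Frobenius norm. -/
def frob {m n : ℕ} (M : Matrix (Fin m) (Fin n) ℝ) : ℝ :=
  Real.sqrt (∑ i, ∑ j, (M i j) ^ 2)

/-- `‖M‖_{1→1}`: maximum column absolute sum. -/
def n11 {m n : ℕ} (M : Matrix (Fin m) (Fin n) ℝ) : ℝ := ⨆ j, ∑ i, |M i j|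

/-- `‖M‖_{∞→∞}`: maximum row absolute sum. -/
def nII {m n : ℕ} (M : Matrix (Fin m) (Fin n) ℝ) : ℝ := ⨆ i, ∑ j, |M i j|

/-- Spectral norm `‖M‖_{2→2}`. -/
def spec {m n : ℕ} (M : Matrix (Fin m) (Fin n) ℝ) : ℝ :=
  ‖LinearMap.toContinuousLinearMap (Matrix.toEuclideanLin M)‖

/-- Trace (nuclear) norm: sum of singular values. -/
def traceNorm {m n : ℕ} (M : Matrix (Fin m) (Fin n) ℝ) : ℝ :=
  ∑ i, Real.sqrt ((Matrix.isHermitian_conjTranspose_mul_self M).eigenvalues i)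

/-- The hybrid norm `‖M‖_{♯(ρ)} = max{ρ‖M‖_{1→1}, ρ⁻¹‖M‖_{∞→∞}}`. -/
def sharp {m n : ℕ} (ρ : ℝ) (M : Matrix (Fin m) (Fin n) ℝ) : ℝ :=
  max (ρ * n11 M) (ρ⁻¹ * nII M)

/-- The dual norm `‖·‖_{♭(ρ)}` of `‖·‖_{♯(ρ)}`. -/
def flat {m n : ℕ} (ρ : ℝ) (M : Matrix (Fin m) (Fin n) ℝ) : ℝ :=
  sSup {x : ℝ | ∃ N : Matrix (Fin m) (Fin n) ℝ, sharp ρ N ≤ 1 ∧ x = inner' M N}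

/-- Induced operator norm of a map `T` with respect to the norm `f`. -/
def opNormWrt {m n : ℕ} (f : Matrix (Fin m) (Fin n) ℝ → ℝ)
    (T : Matrix (Fin m) (Fin n) ℝ → Matrix (Fin m) (Fin n) ℝ) : ℝ :=
  sSup {x : ℝ | ∃ M, f M ≤ 1 ∧ x = f (T M)}

/-- Entrywise sign matrix. -/
def signM {m n : ℕ} (M : Matrix (Fin m) (Fin n) ℝ) : Matrix (Fin m) (Fin n) ℝ :=
  Matrix.of fun i j => Real.sign (M i j)

/-- Orthogonal projection onto matrices supported on `supp X`. -/
def POmega {m n : ℕ} (X : Matrix (Fin m) (Fin n) ℝ) (M : Matrix (Fin m) (Fin n) ℝ) :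
    Matrix (Fin m) (Fin n) ℝ :=
  Matrix.of fun i j => if X i j ≠ 0 then M i j else 0

/-- Orthogonal projection onto the tangent space `T` determined by `U`, `V`. -/
def PT {m n r : ℕ} (U : Matrix (Fin m) (Fin r) ℝ) (V : Matrix (Fin n) (Fin r) ℝ)
    (M : Matrix (Fin m) (Fin n) ℝ) : Matrix (Fin m) (Fin n) ℝ :=
  U * Uᵀ * M + M * (V * Vᵀ) - U * Uᵀ * M * (V * Vᵀ)

/-- `‖U‖_{2→∞}`: maximum row Euclidean norm. -/
def two2inf {m r : ℕ} (U : Matrix (Fin m) (Fin r) ℝ) : ℝ :=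
  ⨆ i, Real.sqrt (∑ k, (U i k) ^ 2)

/-- The sparsity measure `α(ρ)` of `X̄_S`. -/
def alpha {m n : ℕ} (X : Matrix (Fin m) (Fin n) ℝ) (ρ : ℝ) : ℝ :=
  max (ρ * n11 (signM X)) (ρ⁻¹ * nII (signM X))

/-- The incoherence measure `β(ρ)` of the singular vectors `U`, `V`. -/
def beta {m n r : ℕ} (U : Matrix (Fin m) (Fin r) ℝ) (V : Matrix (Fin n) (Fin r) ℝ)
    (ρ : ℝ) : ℝ :=
  ρ⁻¹ * linf (U * Uᵀ) + ρ * linf (V * Vᵀ) + two2inf U * two2inf V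

/-- Number of nonzero entries. -/
def suppCard {m n : ℕ} (X : Matrix (Fin m) (Fin n) ℝ) : ℕ :=
  (Finset.univ.filter fun p : Fin m × Fin n => X p.1 p.2 ≠ 0).card

/-!
If `M ∈ Ω̄ ∩ T̄` then `P_T̄ M = M`, and since `P_T̄` is self-adjoint,
`‖M‖_{ℓ1} = ⟨sign M, P_T̄ M⟩ = ⟨P_T̄ (sign M), M⟩ ≤ ‖P_T̄ (sign M)‖_∞ ‖M‖_{ℓ1}`.
Entrywise, `P_T̄ Q = UUᵀQ + QVVᵀ - UUᵀQVVᵀ` is at most `β(ρ) ‖Q‖_{♯(ρ)}`: the first two terms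
by the column and row sums of `Q`, the last by the Schur test, because row `i` of `UUᵀ` has the
Euclidean length of row `i` of `U`. As `sign M` is supported in `supp X̄_S`,
`‖sign M‖_{♯(ρ)} ≤ α(ρ)`, so `‖M‖_{ℓ1} ≤ α(ρ) β(ρ) ‖M‖_{ℓ1}`, which forces `M = 0`.
-/

lemma _root_.Real.sign_mul_self (x : ℝ) : Real.sign x * x = |x| := by
  rcases lt_trichotomy x 0 with hx | rfl | hx
  · rw [Real.sign_of_neg hx, abs_of_neg hx, neg_one_mul]
  · simp
  · rw [Real.sign_of_pos hx, abs_of_pos hx, one_mul]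

lemma _root_.Real.abs_sign_le_abs_sign {x y : ℝ} (h : y = 0 → x = 0) :
    |Real.sign x| ≤ |Real.sign y| := by
  by_cases hy : y = 0
  · simp [hy, h hy]
  · rcases Real.sign_apply_eq x with hx | hx | hx <;>
    rcases Real.sign_apply_eq_of_ne_zero y hy with hy' | hy' <;> simp [hx, hy']

section Norms
variable {m n k : ℕ}

lemma l1_nonneg (M : Matrix (Fin m) (Fin n) ℝ) : 0 ≤ l1 M := by
  unfold l1; positivity

lemma eq_zero_of_l1_eq_zero {M : Matrix (Fin m) (Fin n) ℝ} (h : l1 M = 0) : M = 0 := by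
  ext i j
  have hrow := (Finset.sum_eq_zero_iff_of_nonneg fun i _ => by positivity).mp h i
    (Finset.mem_univ _)
  simpa using (Finset.sum_eq_zero_iff_of_nonneg fun j _ => abs_nonneg _).mp hrow j
    (Finset.mem_univ _)

lemma linf_nonneg (A : Matrix (Fin m) (Fin n) ℝ) : 0 ≤ linf A :=
  Real.iSup_nonneg fun _ => Real.iSup_nonneg fun _ => abs_nonneg _

lemma abs_le_linf (A : Matrix (Fin m) (Fin n) ℝ) (i : Fin m) (j : Fin n) : |A i j| ≤ linf A :=
  (le_ciSup (Set.finite_range _).bddAbove j).trans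
    (le_ciSup (f := fun i => ⨆ j, |A i j|) (Set.finite_range _).bddAbove i)

lemma sum_abs_le_n11 (A : Matrix (Fin m) (Fin n) ℝ) (j : Fin n) : ∑ i, |A i j| ≤ n11 A :=
  le_ciSup (f := fun j => ∑ i, |A i j|) (Set.finite_range _).bddAbove j

lemma sum_abs_le_nII (A : Matrix (Fin m) (Fin n) ℝ) (i : Fin m) : ∑ j, |A i j| ≤ nII A :=
  le_ciSup (f := fun i => ∑ j, |A i j|) (Set.finite_range _).bddAbove i

lemma n11_nonneg (A : Matrix (Fin m) (Fin n) ℝ) : 0 ≤ n11 A :=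
  Real.iSup_nonneg fun _ => by positivity

lemma nII_nonneg (A : Matrix (Fin m) (Fin n) ℝ) : 0 ≤ nII A :=
  Real.iSup_nonneg fun _ => by positivity

lemma n11_le_n11 {A B : Matrix (Fin m) (Fin n) ℝ} (h : ∀ i j, |A i j| ≤ |B i j|) :
    n11 A ≤ n11 B :=
  Real.iSup_le (fun j => (Finset.sum_le_sum fun i _ => h i j).trans (sum_abs_le_n11 B j))
    (n11_nonneg B)

lemma nII_le_nII {A B : Matrix (Fin m) (Fin n) ℝ} (h : ∀ i j, |A i j| ≤ |B i j|) :
    nII A ≤ nII B :=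
  Real.iSup_le (fun i => (Finset.sum_le_sum fun j _ => h i j).trans (sum_abs_le_nII B i))
    (nII_nonneg B)

lemma sqrt_sum_sq_le_two2inf (U : Matrix (Fin m) (Fin k) ℝ) (i : Fin m) :
    √(∑ l, U i l ^ 2) ≤ two2inf U :=
  le_ciSup (f := fun i => √(∑ l, U i l ^ 2)) (Set.finite_range _).bddAbove i

lemma two2inf_nonneg (U : Matrix (Fin m) (Fin k) ℝ) : 0 ≤ two2inf U :=
  Real.iSup_nonneg fun _ => Real.sqrt_nonneg _

lemma sharp_nonneg {ρ : ℝ} (hρ : 0 ≤ ρ) (Q : Matrix (Fin m) (Fin n) ℝ) : 0 ≤ sharp ρ Q :=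
  (mul_nonneg hρ (n11_nonneg Q)).trans (le_max_left _ _)

lemma n11_le_inv_mul_sharp {ρ : ℝ} (hρ : 0 < ρ) (Q : Matrix (Fin m) (Fin n) ℝ) :
    n11 Q ≤ ρ⁻¹ * sharp ρ Q := by
  rw [le_inv_mul_iff₀ hρ]; exact le_max_left _ _

lemma nII_le_mul_sharp {ρ : ℝ} (hρ : 0 < ρ) (Q : Matrix (Fin m) (Fin n) ℝ) :
    nII Q ≤ ρ * sharp ρ Q := by
  rw [← inv_mul_le_iff₀ hρ]; exact le_max_right _ _

lemma sqrt_nII_mul_n11_le_sharp {ρ : ℝ} (hρ : 0 < ρ) (Q : Matrix (Fin m) (Fin n) ℝ) :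
    √(nII Q * n11 Q) ≤ sharp ρ Q := by
  have hs := sharp_nonneg hρ.le Q
  rw [Real.sqrt_le_left hs]
  calc nII Q * n11 Q ≤ (ρ * sharp ρ Q) * (ρ⁻¹ * sharp ρ Q) :=
        mul_le_mul (nII_le_mul_sharp hρ Q) (n11_le_inv_mul_sharp hρ Q) (n11_nonneg Q)
          (by positivity)
    _ = sharp ρ Q ^ 2 := by field_simp

end Norms

section Inner
variable {m n r : ℕ}

lemma inner'_eq_trace (A B : Matrix (Fin m) (Fin n) ℝ) : inner' A B = trace (Aᵀ * B) := by
  simp only [inner', trace, diag_apply, mul_apply, transpose_apply]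
  exact Finset.sum_comm

lemma isSymm_mul_transpose (U : Matrix (Fin m) (Fin r) ℝ) : (U * Uᵀ).IsSymm := by
  rw [IsSymm, transpose_mul, transpose_transpose]

lemma inner'_PT (U : Matrix (Fin m) (Fin r) ℝ) (V : Matrix (Fin n) (Fin r) ℝ)
    (Q M : Matrix (Fin m) (Fin n) ℝ) : inner' Q (PT U V M) = inner' (PT U V Q) M := by
  simp only [inner'_eq_trace, PT, transpose_add, transpose_sub, transpose_mul,
    (isSymm_mul_transpose U).eq, (isSymm_mul_transpose V).eq,
    Matrix.mul_add, Matrix.mul_sub, Matrix.add_mul, Matrix.sub_mul, trace_add, trace_sub]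
  generalize U * Uᵀ = P
  generalize V * Vᵀ = R
  simp only [Matrix.mul_assoc]
  rw [trace_mul_comm R, trace_mul_comm R]
  simp only [Matrix.mul_assoc]

lemma inner'_le_linf_mul_l1 (A B : Matrix (Fin m) (Fin n) ℝ) : inner' A B ≤ linf A * l1 B := by
  simp only [inner', l1, Finset.mul_sum]
  refine Finset.sum_le_sum fun i _ => Finset.sum_le_sum fun j _ => ?_
  calc A i j * B i j ≤ |A i j| * |B i j| := (le_abs_self _).trans (abs_mul _ _).le
    _ ≤ linf A * |B i j| := by gcongr; exact abs_le_linf A i j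

lemma l1_eq_inner'_signM (M : Matrix (Fin m) (Fin n) ℝ) : l1 M = inner' (signM M) M := by
  simp only [l1, inner', signM, of_apply, Real.sign_mul_self]

end Inner

section EntryBounds
variable {m n p q : ℕ}

lemma abs_mul_apply_le_linf_mul_n11 (A : Matrix (Fin p) (Fin m) ℝ) (Q : Matrix (Fin m) (Fin n) ℝ)
    (i : Fin p) (j : Fin n) : |(A * Q) i j| ≤ linf A * n11 Q :=
  calc |(A * Q) i j| ≤ ∑ k, |A i k| * |Q k j| := by
        rw [mul_apply]; exact (Finset.abs_sum_le_sum_abs _ _).trans_eq (by simp only [abs_mul])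
    _ ≤ ∑ k, linf A * |Q k j| := by gcongr with k; exact abs_le_linf A i k
    _ ≤ linf A * n11 Q := by
        rw [← Finset.mul_sum]; exact mul_le_mul_of_nonneg_left (sum_abs_le_n11 Q j) (linf_nonneg A)

lemma abs_mul_apply_le_nII_mul_linf (Q : Matrix (Fin m) (Fin n) ℝ) (B : Matrix (Fin n) (Fin q) ℝ)
    (i : Fin m) (j : Fin q) : |(Q * B) i j| ≤ nII Q * linf B :=
  calc |(Q * B) i j| ≤ ∑ l, |Q i l| * |B l j| := by
        rw [mul_apply]; exact (Finset.abs_sum_le_sum_abs _ _).trans_eq (by simp only [abs_mul])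
    _ ≤ ∑ l, |Q i l| * linf B := by gcongr with l; exact abs_le_linf B l j
    _ ≤ nII Q * linf B := by
        rw [← Finset.sum_mul]; exact mul_le_mul_of_nonneg_right (sum_abs_le_nII Q i) (linf_nonneg B)

lemma abs_mul_mul_apply_le (A : Matrix (Fin p) (Fin m) ℝ) (Q : Matrix (Fin m) (Fin n) ℝ)
    (B : Matrix (Fin n) (Fin q) ℝ) (i : Fin p) (j : Fin q) :
    |(A * Q * B) i j| ≤ √(nII Q * n11 Q) * √(∑ k, A i k ^ 2) * √(∑ l, B l j ^ 2) := by
  have hA : ∑ x : Fin m × Fin n, A i x.1 ^ 2 * |Q x.1 x.2| ≤ nII Q * ∑ k, A i k ^ 2 := by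
    simp only [Fintype.sum_prod_type, Finset.mul_sum]
    refine Finset.sum_le_sum fun k _ => ?_
    rw [← Finset.mul_sum, mul_comm]
    exact mul_le_mul_of_nonneg_right (sum_abs_le_nII Q k) (sq_nonneg _)
  have hB : ∑ x : Fin m × Fin n, |Q x.1 x.2| * B x.2 j ^ 2 ≤ n11 Q * ∑ l, B l j ^ 2 := by
    simp only [Fintype.sum_prod_type]
    rw [Finset.sum_comm, Finset.mul_sum]
    refine Finset.sum_le_sum fun l _ => ?_
    rw [← Finset.sum_mul]
    exact mul_le_mul_of_nonneg_right (sum_abs_le_n11 Q l) (sq_nonneg _)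
  have hCS : (∑ x : Fin m × Fin n, |A i x.1| * |Q x.1 x.2| * |B x.2 j|) ^ 2 ≤
      (∑ x : Fin m × Fin n, A i x.1 ^ 2 * |Q x.1 x.2|) *
        ∑ x : Fin m × Fin n, |Q x.1 x.2| * B x.2 j ^ 2 :=
    Finset.sum_sq_le_sum_mul_sum_of_sq_le_mul _ (fun _ _ => by positivity)
      (fun _ _ => by positivity) fun x _ => by
        rw [mul_pow, mul_pow, sq_abs (A i x.1), sq_abs (B x.2 j)]; exact le_of_eq (by ring)
  calc |(A * Q * B) i j| = |∑ x : Fin m × Fin n, A i x.1 * Q x.1 x.2 * B x.2 j| := by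
        simp only [mul_apply, Finset.sum_mul, Fintype.sum_prod_type]; rw [Finset.sum_comm]
    _ ≤ ∑ x : Fin m × Fin n, |A i x.1| * |Q x.1 x.2| * |B x.2 j| :=
        (Finset.abs_sum_le_sum_abs _ _).trans_eq (by simp only [abs_mul])
    _ ≤ √((nII Q * ∑ k, A i k ^ 2) * (n11 Q * ∑ l, B l j ^ 2)) :=
        Real.le_sqrt_of_sq_le (hCS.trans (mul_le_mul hA hB (by positivity)
          (mul_nonneg (nII_nonneg Q) (by positivity))))
    _ = √(nII Q * n11 Q) * √(∑ k, A i k ^ 2) * √(∑ l, B l j ^ 2) := by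
        rw [← Real.sqrt_mul' _ (by positivity), ← Real.sqrt_mul' _ (by positivity)]
        ring_nf

end EntryBounds

section Tangent
variable {m n r : ℕ}

lemma sum_sq_mul_transpose_apply {U : Matrix (Fin m) (Fin r) ℝ} (hU : Uᵀ * U = 1) (i : Fin m) :
    ∑ k, (U * Uᵀ) i k ^ 2 = ∑ l, U i l ^ 2 := by
  have hidem : U * Uᵀ * (U * Uᵀ) = U * Uᵀ := by
    rw [Matrix.mul_assoc, ← Matrix.mul_assoc Uᵀ, hU, Matrix.one_mul]
  calc ∑ k, (U * Uᵀ) i k ^ 2 = (U * Uᵀ * (U * Uᵀ)) i i := by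
        simp only [sq, mul_apply (M := U * Uᵀ) (N := U * Uᵀ), (isSymm_mul_transpose U).apply i]
    _ = ∑ l, U i l ^ 2 := by rw [hidem, mul_apply]; simp only [transpose_apply, sq]

lemma beta_nonneg (U : Matrix (Fin m) (Fin r) ℝ) (V : Matrix (Fin n) (Fin r) ℝ) {ρ : ℝ}
    (hρ : 0 < ρ) : 0 ≤ beta U V ρ := by
  have := linf_nonneg (U * Uᵀ)
  have := linf_nonneg (V * Vᵀ)
  have := two2inf_nonneg U
  have := two2inf_nonneg V
  unfold beta; positivity

lemma linf_PT_le {U : Matrix (Fin m) (Fin r) ℝ} {V : Matrix (Fin n) (Fin r) ℝ}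
    (hU : Uᵀ * U = 1) (hV : Vᵀ * V = 1) {ρ : ℝ} (hρ : 0 < ρ) (Q : Matrix (Fin m) (Fin n) ℝ) :
    linf (PT U V Q) ≤ beta U V ρ * sharp ρ Q := by
  have hs := sharp_nonneg hρ.le Q
  have hβs := mul_nonneg (beta_nonneg U V hρ) hs
  refine Real.iSup_le (fun i => Real.iSup_le (fun j => ?_) hβs) hβs
  have hUrow : √(∑ k, (U * Uᵀ) i k ^ 2) ≤ two2inf U := by
    rw [sum_sq_mul_transpose_apply hU]; exact sqrt_sum_sq_le_two2inf U i
  have hVcol : √(∑ l, (V * Vᵀ) l j ^ 2) ≤ two2inf V := by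
    have hsymm : ∑ l, (V * Vᵀ) l j ^ 2 = ∑ l, (V * Vᵀ) j l ^ 2 :=
      Finset.sum_congr rfl fun l _ => by rw [(isSymm_mul_transpose V).apply j l]
    rw [hsymm, sum_sq_mul_transpose_apply hV]; exact sqrt_sum_sq_le_two2inf V j
  calc |PT U V Q i j|
      ≤ |(U * Uᵀ * Q) i j| + |(Q * (V * Vᵀ)) i j| + |(U * Uᵀ * Q * (V * Vᵀ)) i j| := by
        simp only [PT, Matrix.add_apply, Matrix.sub_apply]
        exact (abs_sub _ _).trans (by gcongr; exact abs_add_le _ _)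
    _ ≤ linf (U * Uᵀ) * n11 Q + nII Q * linf (V * Vᵀ) +
          √(nII Q * n11 Q) * √(∑ k, (U * Uᵀ) i k ^ 2) * √(∑ l, (V * Vᵀ) l j ^ 2) := by
        gcongr
        · exact abs_mul_apply_le_linf_mul_n11 _ _ i j
        · exact abs_mul_apply_le_nII_mul_linf _ _ i j
        · exact abs_mul_mul_apply_le _ _ _ i j
    _ ≤ linf (U * Uᵀ) * (ρ⁻¹ * sharp ρ Q) + ρ * sharp ρ Q * linf (V * Vᵀ) +
          sharp ρ Q * two2inf U * two2inf V := by
        have := linf_nonneg (U * Uᵀ)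
        have := linf_nonneg (V * Vᵀ)
        have := two2inf_nonneg U
        gcongr
        · exact n11_le_inv_mul_sharp hρ Q
        · exact nII_le_mul_sharp hρ Q
        · exact sqrt_nII_mul_n11_le_sharp hρ Q
    _ = beta U V ρ * sharp ρ Q := by unfold beta; ring

end Tangent

lemma _root_.Matrix.mul_eq_self_of_range_mulVecLin_le {R : Type*} [CommSemiring R]
    {l m n : Type*} [Fintype m] [Fintype n] [Fintype l] {P : Matrix m m R} {X : Matrix m n R}
    {Y : Matrix m l R} (hY : P * Y = Y)
    (h : LinearMap.range X.mulVecLin ≤ LinearMap.range Y.mulVecLin) : P * X = X := by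
  refine ext_iff_mulVec.mpr fun v => ?_
  obtain ⟨w, hw⟩ := h (LinearMap.mem_range_self _ v)
  simp only [mulVecLin_apply] at hw
  rw [← mulVec_mulVec, ← hw, mulVec_mulVec, hY]

section Identifiability
variable {m n r : ℕ}

lemma PT_add_eq_self {U : Matrix (Fin m) (Fin r) ℝ} {V : Matrix (Fin n) (Fin r) ℝ}
    {A B : Matrix (Fin m) (Fin n) ℝ} (hA : U * Uᵀ * A = A) (hB : B * (V * Vᵀ) = B) :
    PT U V (A + B) = A + B := by
  have hBA : U * Uᵀ * (A + B) * (V * Vᵀ) = A * (V * Vᵀ) + U * Uᵀ * B := by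
    rw [Matrix.mul_add, hA, Matrix.add_mul, Matrix.mul_assoc (U * Uᵀ) B, hB]
  rw [PT, hBA, Matrix.mul_add, Matrix.add_mul, hA, hB]
  abel

lemma PT_add_eq_self_of_range_le {U : Matrix (Fin m) (Fin r) ℝ} {V : Matrix (Fin n) (Fin r) ℝ}
    (hU : Uᵀ * U = 1) (hV : Vᵀ * V = 1) {D : Matrix (Fin r) (Fin r) ℝ}
    {X X₁ X₂ : Matrix (Fin m) (Fin n) ℝ} (hX : X = U * D * Vᵀ)
    (h₁ : LinearMap.range X₁.mulVecLin ≤ LinearMap.range X.mulVecLin)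
    (h₂ : LinearMap.range X₂ᵀ.mulVecLin ≤ LinearMap.range Xᵀ.mulVecLin) :
    PT U V (X₁ + X₂) = X₁ + X₂ := by
  have hUX : U * Uᵀ * X = X := by
    simp only [hX, ← Matrix.mul_assoc]; rw [Matrix.mul_assoc U Uᵀ U, hU, Matrix.mul_one]
  have hVX : V * Vᵀ * Xᵀ = Xᵀ := by
    simp only [hX, transpose_mul, transpose_transpose, ← Matrix.mul_assoc]
    rw [Matrix.mul_assoc V Vᵀ V, hV, Matrix.mul_one]
  have hX₂ : X₂ * (V * Vᵀ) = X₂ := by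
    simpa only [transpose_mul, transpose_transpose] using
      congrArg transpose (mul_eq_self_of_range_mulVecLin_le hVX h₂)
  exact PT_add_eq_self (mul_eq_self_of_range_mulVecLin_le hUX h₁) hX₂

lemma sharp_signM_le_alpha {Xs M : Matrix (Fin m) (Fin n) ℝ} {ρ : ℝ} (hρ : 0 < ρ)
    (hM : ∀ i j, Xs i j = 0 → M i j = 0) : sharp ρ (signM M) ≤ alpha Xs ρ := by
  have h : ∀ i j, |signM M i j| ≤ |signM Xs i j| := fun i j =>
    Real.abs_sign_le_abs_sign (hM i j)
  exact max_le_max (by gcongr; exact n11_le_n11 h) (by gcongr; exact nII_le_nII h)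

lemma l1_le_alpha_mul_beta_mul_l1 {U : Matrix (Fin m) (Fin r) ℝ} {V : Matrix (Fin n) (Fin r) ℝ}
    (hU : Uᵀ * U = 1) (hV : Vᵀ * V = 1) {Xs M : Matrix (Fin m) (Fin n) ℝ} {ρ : ℝ} (hρ : 0 < ρ)
    (hΩ : ∀ i j, Xs i j = 0 → M i j = 0) (hT : PT U V M = M) :
    l1 M ≤ alpha Xs ρ * beta U V ρ * l1 M := by
  have hl1 := l1_nonneg M
  calc l1 M = inner' (signM M) (PT U V M) := by rw [hT, l1_eq_inner'_signM]
    _ = inner' (PT U V (signM M)) M := inner'_PT U V _ M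
    _ ≤ linf (PT U V (signM M)) * l1 M := inner'_le_linf_mul_l1 _ M
    _ ≤ beta U V ρ * sharp ρ (signM M) * l1 M := by gcongr; exact linf_PT_le hU hV hρ _
    _ ≤ beta U V ρ * alpha Xs ρ * l1 M := by
        have := beta_nonneg U V hρ
        gcongr; exact sharp_signM_le_alpha hρ hΩ
    _ = alpha Xs ρ * beta U V ρ * l1 M := by ring

end Identifiability

theorem identifiability_general {m n r : ℕ} (Xs Xl : Matrix (Fin m) (Fin n) ℝ)
    (U : Matrix (Fin m) (Fin r) ℝ) (V : Matrix (Fin n) (Fin r) ℝ) (σ : Fin r → ℝ)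
    (hU : Uᵀ * U = 1) (hV : Vᵀ * V = 1)
    (hXl : Xl = U * Matrix.diagonal σ * Vᵀ)
    (h : ∃ ρ > 0, alpha Xs ρ * beta U V ρ < 1) :
    ∀ M : Matrix (Fin m) (Fin n) ℝ,
      (∀ i j, Xs i j = 0 → M i j = 0) →
      (∃ X₁ X₂ : Matrix (Fin m) (Fin n) ℝ, M = X₁ + X₂ ∧
        LinearMap.range X₁.mulVecLin ≤ LinearMap.range Xl.mulVecLin ∧
        LinearMap.range X₂ᵀ.mulVecLin ≤ LinearMap.range Xlᵀ.mulVecLin) →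
      M = 0 := by
  rintro M hΩ ⟨X₁, X₂, hM, h₁, h₂⟩
  obtain ⟨ρ, hρ, hαβ⟩ := h
  have hT : PT U V M = M := hM ▸ PT_add_eq_self_of_range_le hU hV hXl h₁ h₂
  have hle := l1_le_alpha_mul_beta_mul_l1 hU hV hρ hΩ hT
  have hl1 := l1_nonneg M
  exact eq_zero_of_l1_eq_zero (le_antisymm (by nlinarith) hl1)

/-- identifiability, `Ω̄ ∩ T̄ = {0}` when `inf_ρ α(ρ)β(ρ) < 1`. -/
theorem identifiability {m n r : ℕ} (Xs Xl : Matrix (Fin m) (Fin n) ℝ)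
    (U : Matrix (Fin m) (Fin r) ℝ) (V : Matrix (Fin n) (Fin r) ℝ) (σ : Fin r → ℝ)
    (hσ : ∀ i, 0 < σ i) (hU : Uᵀ * U = 1) (hV : Vᵀ * V = 1)
    (hXl : Xl = U * Matrix.diagonal σ * Vᵀ)
    (h : ∃ ρ > 0, alpha Xs ρ * beta U V ρ < 1) :
    ∀ M : Matrix (Fin m) (Fin n) ℝ,
      (∀ i j, Xs i j = 0 → M i j = 0) →
      (∃ X₁ X₂ : Matrix (Fin m) (Fin n) ℝ, M = X₁ + X₂ ∧
        LinearMap.range X₁.mulVecLin ≤ LinearMap.range Xl.mulVecLin ∧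
        LinearMap.range X₂ᵀ.mulVecLin ≤ LinearMap.range Xlᵀ.mulVecLin) →
      M = 0 :=
  identifiability_general Xs Xl U V σ hU hV hXl h

end SLR
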